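/- arXiv:2502.16019 — 2 statements merged into one kernel-verified Lean document; each statement's English description precedes it below -/
import Mathlib

section
/- Let f and g be non-decreasing real-valued functions on {0,1,2,...} with -f(0) < g(0), and let (M_n)_{n ≥ 0} be a supermartingale with M_n ≥ -f(n) for all n ≥ 0. Define s(n) = ∏_{t=n}^∞ (1 - (f(t+1)-f(t))/(g(t+1)+f(t+1))), which lies in [0,1], and define the process K_n = 1 - ((g(n) - M_n)/(g(n) + f(n))) · s(n). Then (K_n)_{n ≥ 0} is a non-negative supermartingale. -/
/-!
Writing `c n = s n / (g n + f n)`, the process is affine in the supermartingale,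
`K n = (1 - g n * c n) + c n * M n` with `c n ≥ 0`, so it is a supermartingale as soon as
`(g n - x) * c n ≤ (g (n + 1) - x) * c (n + 1)` for every value `x ≥ -f n` that `M n` can take.
Since `s n = (g (n + 1) + f n) / (g (n + 1) + f (n + 1)) * s (n + 1)`, this reduces to
`(g n - x) * (g (n + 1) + f n) ≤ (g (n + 1) - x) * (g n + f n)`, whose difference is
`(g (n + 1) - g n) * (f n + x) ≥ 0`. Non-negativity holds because `(g n - M n) / (g n + f n) ≤ 1`
and `s n ≤ 1`.
-/

open MeasureTheory Finset

lemma Real.multipliable_of_nonneg_of_le_one {ι : Type*} {b : ι → ℝ} (h0 : ∀ i, 0 ≤ b i)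
    (h1 : ∀ i, b i ≤ 1) : Multipliable b := by
  have hbdd : BddBelow (Set.range fun s : Finset ι => ∏ i ∈ s, b i) :=
    ⟨0, by rintro _ ⟨s, rfl⟩; exact prod_nonneg fun i _ => h0 i⟩
  exact ⟨_, tendsto_atTop_isGLB (prod_anti_set_of_le_one h0 h1)
    (isGLB_csInf (Set.range_nonempty _) hbdd)⟩

lemma tprod_nat_add_eq_mul {M : Type*} [CommMonoid M] [TopologicalSpace M] [ContinuousMul M]
    [T2Space M] {b : ℕ → M} (n : ℕ) (hb : Multipliable fun t => b (n + 1 + t)) :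
    ∏' t, b (n + t) = b n * ∏' t, b (n + 1 + t) := by
  have hshift : (fun t => b (n + (t + 1))) = fun t => b (n + 1 + t) := by
    funext t; rw [add_comm t, add_assoc]
  rw [tprod_eq_zero_mul' (f := fun t => b (n + t)) (by rwa [hshift]), hshift, add_zero]

noncomputable def tailFactor (f g : ℕ → ℝ) (m : ℕ) : ℝ :=
  1 - (f (m + 1) - f m) / (g (m + 1) + f (m + 1))

section Monotone

variable {f g : ℕ → ℝ}

lemma add_pos_of_monotone (hf : Monotone f) (hg : Monotone g) (h0 : -f 0 < g 0) (n : ℕ) :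
    0 < g n + f n := by
  have := add_le_add (hg n.zero_le) (hf n.zero_le)
  linarith

lemma tailFactor_eq {m : ℕ} (hm : g (m + 1) + f (m + 1) ≠ 0) :
    tailFactor f g m = (g (m + 1) + f m) / (g (m + 1) + f (m + 1)) := by
  rw [tailFactor, eq_div_iff hm, sub_mul, div_mul_cancel₀ _ hm]
  ring

lemma tailFactor_nonneg (hf : Monotone f) (hg : Monotone g) (h0 : -f 0 < g 0)
    (m : ℕ) : 0 ≤ tailFactor f g m := by
  have hd := add_pos_of_monotone hf hg h0
  rw [tailFactor_eq (hd (m + 1)).ne']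
  have := hg m.le_succ
  exact div_nonneg (by linarith [hd m]) (hd (m + 1)).le

lemma tailFactor_le_one (hf : Monotone f) (hg : Monotone g) (h0 : -f 0 < g 0)
    (m : ℕ) : tailFactor f g m ≤ 1 := by
  have hd := add_pos_of_monotone hf hg h0
  rw [tailFactor_eq (hd (m + 1)).ne']
  exact div_le_one_of_le₀ (by linarith [hf m.le_succ]) (hd (m + 1)).le

lemma tprod_tailFactor_eq_mul (hf : Monotone f) (hg : Monotone g) (h0 : -f 0 < g 0)
    (n : ℕ) :
    ∏' t, tailFactor f g (n + t) = tailFactor f g n * ∏' t, tailFactor f g (n + 1 + t) :=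
  tprod_nat_add_eq_mul n (Real.multipliable_of_nonneg_of_le_one
    (fun _ => tailFactor_nonneg hf hg h0 _) fun _ => tailFactor_le_one hf hg h0 _)

lemma sub_mul_div_le_of_tailFactor (hf : Monotone f) (hg : Monotone g) (h0 : -f 0 < g 0)
    {s : ℕ → ℝ} {n : ℕ} {x : ℝ} (hrec : s n = tailFactor f g n * s (n + 1))
    (hs : 0 ≤ s (n + 1)) (hx : -f n ≤ x) :
    (g n - x) * (s n / (g n + f n)) ≤ (g (n + 1) - x) * (s (n + 1) / (g (n + 1) + f (n + 1))) := by
  have hd := add_pos_of_monotone hf hg h0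
  have hcore : (g n - x) * (g (n + 1) + f n) ≤ (g (n + 1) - x) * (g n + f n) := by
    nlinarith [mul_nonneg (sub_nonneg.2 (hg n.le_succ)) (neg_le_iff_add_nonneg.1 hx)]
  calc (g n - x) * (s n / (g n + f n))
      = (g n - x) * (g (n + 1) + f n) / (g n + f n) * (s (n + 1) / (g (n + 1) + f (n + 1))) := by
        rw [hrec, tailFactor_eq (hd _).ne']
        ring
    _ ≤ (g (n + 1) - x) * (s (n + 1) / (g (n + 1) + f (n + 1))) :=
        mul_le_mul_of_nonneg_right ((div_le_iff₀ (hd n)).2 hcore) (div_nonneg hs (hd _).le)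

end Monotone

lemma one_sub_mul_nonneg {α : Type*} [Field α] [LinearOrder α] [IsStrictOrderedRing α] {q s : α}
    (hq : q ≤ 1) (hs0 : 0 ≤ s) (hs1 : s ≤ 1) : 0 ≤ 1 - q * s := by
  rcases le_total q 0 with h | h <;> nlinarith

namespace MeasureTheory

variable {Ω : Type*} {m mΩ : MeasurableSpace Ω} {μ : Measure Ω}

lemma condExp_const_add_const_mul [IsFiniteMeasure μ] (hm : m ≤ mΩ) (a c : ℝ) {X : Ω → ℝ}
    (hX : Integrable X μ) :
    μ[fun ω => a + c * X ω | m] =ᵐ[μ] fun ω => a + c * μ[X | m] ω := by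
  filter_upwards [condExp_add (integrable_const a) (hX.smul c) m, condExp_smul c X m]
    with ω h_add h_smul
  change μ[(fun _ => a) + c • X | m] ω = _
  rw [h_add, Pi.add_apply, h_smul, condExp_const hm]
  rfl

theorem Supermartingale.const_add_const_mul [IsFiniteMeasure μ] {𝒢 : Filtration ℕ mΩ}
    {M : ℕ → Ω → ℝ} {a c : ℕ → ℝ} (hM : Supermartingale M 𝒢 μ) (hc : ∀ n, 0 ≤ c n)
    (hstep : ∀ n, ∀ᵐ ω ∂μ, a (n + 1) + c (n + 1) * M n ω ≤ a n + c n * M n ω) :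
    Supermartingale (fun n ω => a n + c n * M n ω) 𝒢 μ := by
  refine supermartingale_nat (fun n => stronglyMeasurable_const.add
    ((hM.stronglyAdapted n).const_mul _)) (fun n => (integrable_const _).add
    ((hM.integrable n).const_mul _)) fun n => ?_
  filter_upwards [condExp_const_add_const_mul (𝒢.le n) (a (n + 1)) (c (n + 1))
    (hM.integrable (n + 1)), hM.condExp_ae_le (Nat.le_succ n), hstep n] with ω h_eq h_le h_step
  rw [h_eq]
  exact (add_le_add_right (mul_le_mul_of_nonneg_left h_le (hc _)) _).trans h_step

end MeasureTheory

/-- The auxiliary process `K n = 1 - ((g n - M n)/(g n + f n)) · s n`, where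
`s n = ∏_{t=n}^∞ (1 - (f (t+1) - f t)/(g (t+1) + f (t+1)))`, is a non-negative
supermartingale whenever `M` is a supermartingale bounded below by `-f`. -/
theorem aux_process_is_nonneg_supermartingale {Ω : Type*} {mΩ : MeasurableSpace Ω}
    {μ : Measure Ω} [IsProbabilityMeasure μ] {𝒢 : Filtration ℕ mΩ}
    {M : ℕ → Ω → ℝ} {f g : ℕ → ℝ}
    (hf : Monotone f) (hg : Monotone g) (h0 : -f 0 < g 0)
    (hM : Supermartingale M 𝒢 μ)
    (hlb : ∀ n, ∀ᵐ ω ∂μ, -f n ≤ M n ω)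
    (s : ℕ → ℝ)
    (hs : ∀ n, s n =
      ∏' t : ℕ, (1 - (f (n + t + 1) - f (n + t)) / (g (n + t + 1) + f (n + t + 1))))
    (hs01 : ∀ n, s n ∈ Set.Icc (0 : ℝ) 1)
    (K : ℕ → Ω → ℝ)
    (hK : ∀ n ω, K n ω = 1 - (g n - M n ω) / (g n + f n) * s n) :
    Supermartingale K 𝒢 μ ∧ ∀ n, 0 ≤ᵐ[μ] K n := by
  have hd := add_pos_of_monotone hf hg h0
  have hrec (n : ℕ) : s n = tailFactor f g n * s (n + 1) := by
    rw [hs, hs]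
    exact tprod_tailFactor_eq_mul hf hg h0 n
  have hK_affine : K = fun n ω =>
      (1 - g n * (s n / (g n + f n))) + s n / (g n + f n) * M n ω := by
    funext n ω
    rw [hK]
    field_simp
    ring
  refine ⟨?_, fun n => ?_⟩
  · rw [hK_affine]
    refine hM.const_add_const_mul (fun n => div_nonneg (hs01 n).1 (hd n).le) fun n => ?_
    filter_upwards [hlb n] with ω hω
    linarith [sub_mul_div_le_of_tailFactor hf hg h0 (hrec n) (hs01 (n + 1)).1 hω]
  · filter_upwards [hlb n] with ω hω
    rw [Pi.zero_apply, hK]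
    exact one_sub_mul_nonneg ((div_le_one (hd n)).2 (by linarith)) (hs01 n).1 (hs01 n).2
end

section
/- Define I(x) = ∫_0^x e^{u²/2} · erf(u/√2) du and ℓ(x) = √( (e^{x²/2} - 1)³ / (x²·e^{x²/2}) ) for x ≠ 0 (with ℓ(0) = 0). Then I(x) ≥ ℓ(x) for all real x ≥ 0. -/
/-!
Both sides vanish at `0`, so it suffices to compare derivatives on `(0, ∞)`. Pólya's bound
`1 - e^{-z²} ≤ erf z ^ 2` gives `I' x = e^{x²/2} erf (x/√2) ≥ e^{x²/4} √(e^{x²/2} - 1)`,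
and this dominates `ℓ' x` because `1 + t ≤ e^t` for `t = x²/2`.

For Pólya's bound, `D z = erf z ^ 2 - (1 - e^{-z²})` vanishes at `0` and tends to `0` at `∞`,
and `D' z = 2 e^{-z²} (2/√π · erf z - z)`. The second factor is concave on `[0, ∞)` and
vanishes at `0`, so it is nonnegative up to some point and negative afterwards: `D` rises
from `0` and then decreases to `0`.
-/

open MeasureTheory Real

noncomputable def erf (z : ℝ) : ℝ := (2 / Real.sqrt π) * ∫ t in (0 : ℝ)..z, Real.exp (-t ^ 2)

noncomputable def I (x : ℝ) : ℝ :=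
  ∫ u in (0 : ℝ)..x, Real.exp (u ^ 2 / 2) * erf (u / Real.sqrt 2)

open Filter Set Topology

lemma hasDerivAt_erf (z : ℝ) : HasDerivAt erf (2 / √π * exp (-z ^ 2)) z :=
  ((Continuous.integral_hasStrictDerivAt (by fun_prop) 0 z).hasDerivAt).const_mul _

@[fun_prop]
lemma continuous_erf : Continuous erf :=
  continuous_iff_continuousAt.2 fun z => (hasDerivAt_erf z).continuousAt

@[simp] lemma erf_zero : erf 0 = 0 := by simp [erf]

lemma erf_nonneg {z : ℝ} (hz : 0 ≤ z) : 0 ≤ erf z :=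
  mul_nonneg (by positivity) (intervalIntegral.integral_nonneg hz fun t _ => (exp_pos _).le)

lemma tendsto_erf_atTop : Tendsto erf atTop (𝓝 1) := by
  have hint : IntegrableOn (fun t : ℝ => exp (-t ^ 2)) (Ioi 0) := by
    simpa using (integrable_exp_neg_mul_sq one_pos).integrableOn
  have hgauss : ∫ t in Ioi (0 : ℝ), exp (-t ^ 2) = √π / 2 := by
    simpa using integral_gaussian_Ioi 1
  have hpi : 2 / √π * (√π / 2) = 1 := by field_simp
  have h := (intervalIntegral_tendsto_integral_Ioi 0 hint tendsto_id).const_mul (2 / √π)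
  rwa [hgauss, hpi] at h

lemma concaveOn_erf_sub : ConcaveOn ℝ (Ici 0) fun z => 2 / √π * erf z - z := by
  have hderiv (z : ℝ) : HasDerivAt (fun z => 2 / √π * erf z - z)
      (2 / √π * (2 / √π * exp (-z ^ 2)) - 1) z :=
    ((hasDerivAt_erf z).const_mul _).sub (hasDerivAt_id z)
  refine AntitoneOn.concaveOn_of_deriv (convex_Ici 0)
    (fun z _ => (hderiv z).continuousAt.continuousWithinAt)
    (fun z _ => (hderiv z).differentiableAt.differentiableWithinAt) ?_
  rw [interior_Ici]
  intro y hy z hz hyz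
  rw [(hderiv y).deriv, (hderiv z).deriv]
  gcongr
  exact hy.le

lemma erf_sub_nonneg_of_le {y z : ℝ} (hy : 0 ≤ y) (hyz : y ≤ z)
    (hz : 0 ≤ 2 / √π * erf z - z) : 0 ≤ 2 / √π * erf y - y := by
  have hyseg : y ∈ segment ℝ 0 z := by
    rw [segment_eq_Icc (hy.trans hyz)]
    exact ⟨hy, hyz⟩
  simpa [min_eq_left hz] using
    concaveOn_erf_sub.ge_on_segment self_mem_Ici (hy.trans hyz : (0 : ℝ) ≤ z) hyseg

lemma hasDerivAt_erf_sq_sub (z : ℝ) :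
    HasDerivAt (fun z => erf z ^ 2 - (1 - exp (-z ^ 2)))
      (2 * exp (-z ^ 2) * (2 / √π * erf z - z)) z := by
  have hgauss : HasDerivAt (fun z : ℝ => exp (-z ^ 2)) (exp (-z ^ 2) * -(2 * z)) z := by
    simpa using ((hasDerivAt_pow 2 z).neg).exp
  refine (((hasDerivAt_erf z).pow 2).sub (hgauss.const_sub 1)).congr_deriv ?_
  push_cast
  ring

lemma tendsto_erf_sq_sub : Tendsto (fun z => erf z ^ 2 - (1 - exp (-z ^ 2))) atTop (𝓝 0) := by
  have hgauss : Tendsto (fun z : ℝ => exp (-z ^ 2)) atTop (𝓝 0) :=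
    tendsto_exp_atBot.comp (tendsto_neg_atTop_atBot.comp (tendsto_pow_atTop two_ne_zero))
  simpa using (tendsto_erf_atTop.pow 2).sub (hgauss.const_sub 1)

theorem one_sub_exp_neg_sq_le_erf_sq {z : ℝ} (hz : 0 ≤ z) : 1 - exp (-z ^ 2) ≤ erf z ^ 2 := by
  set D := fun z => erf z ^ 2 - (1 - exp (-z ^ 2)) with hD
  suffices 0 ≤ D z by simpa [hD] using this
  have hDcont : Continuous D :=
    continuous_iff_continuousAt.2 fun y => (hasDerivAt_erf_sq_sub y).continuousAt
  rcases le_or_gt 0 (2 / √π * erf z - z) with hE | hE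
  · have hmono : MonotoneOn D (Icc 0 z) := by
      refine monotoneOn_of_hasDerivWithinAt_nonneg (convex_Icc 0 z) hDcont.continuousOn
        (fun y _ => (hasDerivAt_erf_sq_sub y).hasDerivWithinAt) fun y hy => ?_
      rw [interior_Icc] at hy
      exact mul_nonneg (by positivity) (erf_sub_nonneg_of_le hy.1.le hy.2.le hE)
    simpa [hD] using hmono (left_mem_Icc.2 hz) (right_mem_Icc.2 hz) hz
  · have hanti : AntitoneOn D (Ici z) := by
      refine antitoneOn_of_hasDerivWithinAt_nonpos (convex_Ici z) hDcont.continuousOn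
        (fun y _ => (hasDerivAt_erf_sq_sub y).hasDerivWithinAt) fun y hy => ?_
      rw [interior_Ici] at hy
      have hEy : 2 / √π * erf y - y < 0 :=
        lt_of_not_ge fun h => hE.not_ge (erf_sub_nonneg_of_le hz hy.le h)
      exact mul_nonpos_of_nonneg_of_nonpos (by positivity) hEy.le
    exact le_of_tendsto tendsto_erf_sq_sub
      (eventually_atTop.2 ⟨z, fun y hy => hanti self_mem_Ici hy hy⟩)

noncomputable def ell (x : ℝ) : ℝ := √((exp (x ^ 2 / 2) - 1) ^ 3 / (x ^ 2 * exp (x ^ 2 / 2)))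

lemma exp_sq_div_four_sq (x : ℝ) : exp (x ^ 2 / 4) ^ 2 = exp (x ^ 2 / 2) := by
  rw [← exp_nat_mul]
  ring_nf

lemma exp_sub_one_le_mul_exp (t : ℝ) : exp t - 1 ≤ t * exp t := by
  have h := mul_le_mul_of_nonneg_right (one_sub_le_exp_neg t) (exp_pos t).le
  rw [← exp_add, neg_add_cancel, exp_zero] at h
  linarith

lemma ell_le (x : ℝ) : ell x ≤ exp (x ^ 2 / 2) - 1 := by
  have hA : 0 ≤ exp (x ^ 2 / 2) - 1 := sub_nonneg.2 (one_le_exp (by positivity))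
  refine sqrt_le_iff.2 ⟨hA, div_le_of_le_mul₀ (by positivity) (by positivity) ?_⟩
  have := exp_sub_one_le_mul_exp (x ^ 2 / 2)
  have : 0 ≤ x ^ 2 * exp (x ^ 2 / 2) := by positivity
  nlinarith [sq_nonneg (exp (x ^ 2 / 2) - 1)]

lemma continuous_ell : Continuous ell := by
  refine continuous_iff_continuousAt.2 fun x => ?_
  rcases eq_or_ne x 0 with rfl | hx
  · have hA : Tendsto (fun x : ℝ => exp (x ^ 2 / 2) - 1) (𝓝 0) (𝓝 0) := by
      have h : Continuous fun x : ℝ => exp (x ^ 2 / 2) - 1 := by fun_prop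
      simpa using h.tendsto 0
    show Tendsto ell (𝓝 0) (𝓝 (ell 0))
    rw [show ell 0 = 0 by simp [ell]]
    exact squeeze_zero (fun x => sqrt_nonneg _) ell_le hA
  · unfold ell
    fun_prop (disch := positivity)

lemma ell_eq_of_pos {x : ℝ} (hx : 0 < x) :
    ell x = √(exp (x ^ 2 / 2) - 1) ^ 3 / (x * exp (x ^ 2 / 4)) := by
  have hA : 0 ≤ exp (x ^ 2 / 2) - 1 := sub_nonneg.2 (one_le_exp (by positivity))
  rw [ell, ← sqrt_sq (by positivity : 0 ≤ √(exp (x ^ 2 / 2) - 1) ^ 3 / (x * exp (x ^ 2 / 4)))]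
  congr 1
  rw [div_pow, pow_right_comm, sq_sqrt hA, mul_pow, exp_sq_div_four_sq]

noncomputable def ellDeriv (x : ℝ) : ℝ :=
  √(exp (x ^ 2 / 2) - 1) * (3 * x ^ 2 * exp (x ^ 2 / 2) - (2 + x ^ 2) * (exp (x ^ 2 / 2) - 1))
    / (2 * x ^ 2 * exp (x ^ 2 / 4))

lemma hasDerivAt_ell {x : ℝ} (hx : 0 < x) : HasDerivAt ell (ellDeriv x) x := by
  refine HasDerivAt.congr_of_eventuallyEq ?_
    (eventually_gt_nhds hx |>.mono fun y hy => ell_eq_of_pos hy)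
  have hA : 0 < exp (x ^ 2 / 2) - 1 := sub_pos.2 (one_lt_exp_iff.2 (by positivity))
  have hs : HasDerivAt (fun y => √(exp (y ^ 2 / 2) - 1))
      (x * exp (x ^ 2 / 2) / (2 * √(exp (x ^ 2 / 2) - 1))) x := by
    refine ((((hasDerivAt_pow 2 x).div_const 2).exp.sub_const 1).sqrt hA.ne').congr_deriv ?_
    push_cast
    ring
  have hE : HasDerivAt (fun y => y * exp (y ^ 2 / 4)) (exp (x ^ 2 / 4) * (1 + x ^ 2 / 2)) x := by
    refine ((hasDerivAt_id' x).mul ((hasDerivAt_pow 2 x).div_const 4).exp).congr_deriv ?_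
    push_cast
    ring
  refine ((hs.pow 3).div hE (by positivity)).congr_deriv ?_
  rw [ellDeriv]
  have hss : √(exp (x ^ 2 / 2) - 1) ^ 2 = exp (x ^ 2 / 2) - 1 := sq_sqrt hA.le
  have hsp : 0 < √(exp (x ^ 2 / 2) - 1) := sqrt_pos.2 hA
  simp only [Pi.pow_apply]
  generalize √(exp (x ^ 2 / 2) - 1) = s at *
  rw [← exp_sq_div_four_sq] at hss ⊢
  generalize exp (x ^ 2 / 4) = E at *
  field_simp
  push_cast
  linear_combination (-(2 + x ^ 2) * s ^ 2 / E) * hss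

lemma ellDeriv_le {x : ℝ} (hx : 0 < x) :
    ellDeriv x ≤ exp (x ^ 2 / 4) * √(exp (x ^ 2 / 2) - 1) := by
  rw [ellDeriv, div_le_iff₀ (by positivity),
    show exp (x ^ 2 / 4) * √(exp (x ^ 2 / 2) - 1) * (2 * x ^ 2 * exp (x ^ 2 / 4))
      = √(exp (x ^ 2 / 2) - 1) * (2 * x ^ 2 * exp (x ^ 2 / 2)) by
        rw [← exp_sq_div_four_sq]; ring]
  exact mul_le_mul_of_nonneg_left (by linarith [add_one_le_exp (x ^ 2 / 2)]) (sqrt_nonneg _)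

lemma hasDerivAt_I (x : ℝ) : HasDerivAt I (exp (x ^ 2 / 2) * erf (x / √2)) x :=
  (Continuous.integral_hasStrictDerivAt (by fun_prop) 0 x).hasDerivAt

lemma exp_mul_sqrt_le_exp_mul_erf {x : ℝ} (hx : 0 ≤ x) :
    exp (x ^ 2 / 4) * √(exp (x ^ 2 / 2) - 1) ≤ exp (x ^ 2 / 2) * erf (x / √2) := by
  have herf := one_sub_exp_neg_sq_le_erf_sq (by positivity : 0 ≤ x / √2)
  rw [div_pow, sq_sqrt zero_le_two] at herf
  have hexp : exp (x ^ 2 / 2) * exp (-(x ^ 2 / 2)) = 1 := by rw [← exp_add]; simp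
  rw [show x ^ 2 / 4 = x ^ 2 / 2 / 2 by ring, exp_half, ← sqrt_mul (exp_pos _).le,
    sqrt_le_iff]
  refine ⟨mul_nonneg (exp_pos _).le (erf_nonneg (by positivity)), ?_⟩
  have := mul_le_mul_of_nonneg_left herf (sq_nonneg (exp (x ^ 2 / 2)))
  nlinarith

/-- **Lower bound on `I`** (Lemma 13): `I x ≥ ℓ x` for `x ≥ 0`, where
`ℓ x = √((e^{x²/2} - 1)³/(x² e^{x²/2}))` (which evaluates to `0` at `x = 0`). -/
theorem I_ge_ell (x : ℝ) (hx : 0 ≤ x) :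
    Real.sqrt ((Real.exp (x ^ 2 / 2) - 1) ^ 3 / (x ^ 2 * Real.exp (x ^ 2 / 2))) ≤ I x := by
  have hI : Continuous I := continuous_iff_continuousAt.2 fun y => (hasDerivAt_I y).continuousAt
  have hmono : MonotoneOn (fun y => I y - ell y) (Ici 0) :=
    monotoneOn_of_hasDerivWithinAt_nonneg (convex_Ici 0) (hI.sub continuous_ell).continuousOn
      (fun y hy =>
        ((hasDerivAt_I y).sub (hasDerivAt_ell (by rwa [interior_Ici] at hy))).hasDerivWithinAt)
      fun y hy => by
        rw [interior_Ici] at hy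
        linarith [ellDeriv_le hy, exp_mul_sqrt_le_exp_mul_erf hy.le]
  simpa [I, ell] using hmono self_mem_Ici hx hx
end
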